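/- arXiv:2105.13702 — 2 statements merged into one kernel-verified Lean document; each statement's English description precedes it below -/
import Mathlib

section
/- Let b_i ≥ 0, g_i > 0, α_i > 0, d_i > 0 be real parameters and h_i ∈ ℕ with h_i ≥ 1, for i ∈ Fin 3. Then there exists exactly one x : Fin 3 → ℝ with x(i) ≥ 0 for all i satisfying the equilibrium equations b_i + g_i/(1 + α_i·(x(i+1))^{h_i}) − d_i·x(i) = 0 for all i ∈ Fin 3 (indices modulo 3). That is, the standard repressilator has a unique equilibrium in the nonnegative octant. -/
/-!
An equilibrium is determined by its first coordinate, which must be a fixed point of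
`φ₀ ∘ φ₁ ∘ φ₂`, where `φᵢ` is the Hill repression response solving the `i`-th equation for
`xᵢ`. Each `φᵢ` is continuous and antitone on `[0, ∞)`, hence so is their threefold
composition. An antitone map has at most one fixed point, and a continuous antitone
self-map `f` of `[a, ∞)` has one in `[a, f a]` by the intermediate value theorem.
-/

open Set Function

theorem AntitoneOn.eq_of_isFixedPt {α : Type*} [LinearOrder α] {s : Set α} {f : α → α}
    (hf : AntitoneOn f s) {x y : α} (hx : x ∈ s) (hy : y ∈ s) (hfx : IsFixedPt f x) (hfy : IsFixedPt f y) :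
    x = y := by
  rcases le_total x y with hxy | hyx
  · exact le_antisymm hxy (hfy ▸ hfx ▸ hf hx hy hxy)
  · exact le_antisymm (hfx ▸ hfy ▸ hf hy hx hyx) hyx

section FixedPoint

variable {α : Type*} [ConditionallyCompleteLinearOrder α] [TopologicalSpace α] [OrderTopology α]
  [DenselyOrdered α]

theorem AntitoneOn.existsUnique_isFixedPt_Ici {a : α} {f : α → α}
    (hcont : ContinuousOn f (Ici a)) (hanti : AntitoneOn f (Ici a))
    (hmaps : MapsTo f (Ici a) (Ici a)) : ∃! c, c ∈ Ici a ∧ IsFixedPt f c := by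
  have ha : a ≤ f a := hmaps self_mem_Ici
  obtain ⟨c, hc, hfix⟩ := exists_mem_Icc_isFixedPt (hcont.mono Icc_subset_Ici_self) ha ha
    (hanti self_mem_Ici (hmaps self_mem_Ici) ha)
  exact ⟨c, ⟨hc.1, hfix⟩, fun y hy => hanti.eq_of_isFixedPt hy.1 hc.1 hy.2 hfix⟩

theorem existsUnique_cyclic_eq_of_antitoneOn {a : α} (φ : Fin 3 → α → α)
    (hcont : ∀ i, ContinuousOn (φ i) (Ici a)) (hanti : ∀ i, AntitoneOn (φ i) (Ici a))
    (hmaps : ∀ i, MapsTo (φ i) (Ici a) (Ici a)) :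
    ∃! x : Fin 3 → α, (∀ i, x i ∈ Ici a) ∧ ∀ i, x i = φ i (x (i + 1)) := by
  have hmaps₁₂ : MapsTo (φ 1 ∘ φ 2) (Ici a) (Ici a) := (hmaps 1).comp (hmaps 2)
  obtain ⟨c, ⟨hc, hfix⟩, huniq⟩ := AntitoneOn.existsUnique_isFixedPt_Ici
    ((hcont 0).comp ((hcont 1).comp (hcont 2) (hmaps 2)) hmaps₁₂)
    ((hanti 0).comp_MonotoneOn ((hanti 1).comp (hanti 2) (hmaps 2)) hmaps₁₂)
    ((hmaps 0).comp hmaps₁₂)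
  refine ⟨![c, φ 1 (φ 2 c), φ 2 c], ⟨?_, ?_⟩, ?_⟩
  · intro i
    fin_cases i
    exacts [hc, hmaps₁₂ hc, hmaps 2 hc]
  · intro i
    fin_cases i
    exacts [hfix.symm, rfl, rfl]
  · rintro y ⟨hy, hyeq⟩
    have e₀ : y 0 = φ 0 (y 1) := hyeq 0
    have e₁ : y 1 = φ 1 (y 2) := hyeq 1
    have e₂ : y 2 = φ 2 (y 0) := hyeq 2
    have h₀ : y 0 = c :=
      huniq (y 0) ⟨hy 0, by rw [IsFixedPt, comp_apply, comp_apply, ← e₂, ← e₁, ← e₀]⟩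
    have h₂ : y 2 = φ 2 c := e₂.trans (congrArg (φ 2) h₀)
    have h₁ : y 1 = φ 1 (φ 2 c) := e₁.trans (congrArg (φ 1) h₂)
    ext i
    fin_cases i
    exacts [h₀, h₁, h₂]

end FixedPoint

section HillRepression

noncomputable def hillRepression (b g α d : ℝ) (n : ℕ) (y : ℝ) : ℝ :=
  (b + g / (1 + α * y ^ n)) / d

variable {b g α d : ℝ} {n : ℕ}

theorem hillRepression_continuousOn (hα : 0 ≤ α) :
    ContinuousOn (hillRepression b g α d n) (Ici 0) := by
  refine (continuousOn_const.add (continuousOn_const.div (by fun_prop) ?_)).div_const d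
  intro y (hy : 0 ≤ y)
  positivity

theorem hillRepression_antitoneOn (hg : 0 ≤ g) (hα : 0 ≤ α) (hd : 0 ≤ d) :
    AntitoneOn (hillRepression b g α d n) (Ici 0) := by
  intro x (hx : 0 ≤ x) y _ hxy
  unfold hillRepression
  gcongr

theorem hillRepression_mapsTo (hb : 0 ≤ b) (hg : 0 ≤ g) (hα : 0 ≤ α) (hd : 0 ≤ d) :
    MapsTo (hillRepression b g α d n) (Ici 0) (Ici 0) := by
  intro y (hy : 0 ≤ y)
  show 0 ≤ hillRepression b g α d n y
  unfold hillRepression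
  positivity

theorem eq_hillRepression_iff (hd : d ≠ 0) (x y : ℝ) :
    x = hillRepression b g α d n y ↔ b + g / (1 + α * y ^ n) - d * x = 0 := by
  rw [hillRepression, eq_div_iff hd, sub_eq_zero, eq_comm, mul_comm x d]

end HillRepression

theorem repressilator_unique_equilibrium_general
    (b g α d : Fin 3 → ℝ) (h : Fin 3 → ℕ)
    (hb : ∀ i, 0 ≤ b i) (hg : ∀ i, 0 < g i) (hα : ∀ i, 0 < α i)
    (hd : ∀ i, 0 < d i) :
    ∃! x : Fin 3 → ℝ, (∀ i, 0 ≤ x i) ∧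
      ∀ i : Fin 3, b i + g i / (1 + α i * (x (i + 1)) ^ (h i)) - d i * x i = 0 := by
  have key := existsUnique_cyclic_eq_of_antitoneOn
    (fun i => hillRepression (b i) (g i) (α i) (d i) (h i))
    (fun i => hillRepression_continuousOn (hα i).le)
    (fun i => hillRepression_antitoneOn (hg i).le (hα i).le (hd i).le)
    (fun i => hillRepression_mapsTo (hb i) (hg i).le (hα i).le (hd i).le)
  simpa only [mem_Ici, eq_hillRepression_iff (hd _).ne'] using key

/-- The standard repressilator has a unique equilibrium in the nonnegative octant. -/
theorem repressilator_unique_equilibrium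
    (b g α d : Fin 3 → ℝ) (h : Fin 3 → ℕ)
    (hb : ∀ i, 0 ≤ b i) (hg : ∀ i, 0 < g i) (hα : ∀ i, 0 < α i)
    (hd : ∀ i, 0 < d i) (hh : ∀ i, 1 ≤ h i) :
    ∃! x : Fin 3 → ℝ, (∀ i, 0 ≤ x i) ∧
      ∀ i : Fin 3, b i + g i / (1 + α i * (x (i + 1)) ^ (h i)) - d i * x i = 0 :=
  repressilator_unique_equilibrium_general b g α d h hb hg hα hd
end

section
/- Let d > 0 and c ∈ ℝ, and let J be the 3×3 complex matrix with entries J i i = −d, J i (i+1) = c, J i (i+2) = 0 for i ∈ Fin 3 (indices modulo 3). Then every root of the characteristic polynomial of J has negative real part if and only if −2d < c < d. Explicitly, the eigenvalues of J are −d + c, −d + c·ω and −d + c·ω^2 with ω = exp(2πi/3), having real parts −d + c and (twice) −d − c/2. -/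
open Polynomial

/-- Stability criterion for the repressilator Jacobian: all roots of the
characteristic polynomial have negative real part iff `-2d < c < d`;
explicitly the eigenvalues are `-d + c ω^k` for the cube roots of unity. -/
theorem repressilator_jacobian_stability
    (d c : ℝ) (hd : 0 < d) (ω : ℂ)
    (hω : ω = Complex.exp (2 * (Real.pi : ℂ) * Complex.I / 3))
    (J : Matrix (Fin 3) (Fin 3) ℂ)
    (hJa : ∀ i : Fin 3, J i i = (-d : ℂ))
    (hJb : ∀ i : Fin 3, J i (i + 1) = (c : ℂ))
    (hJc : ∀ i : Fin 3, J i (i + 2) = 0) :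
    ((∀ z : ℂ, J.charpoly.IsRoot z → z.re < 0) ↔ (-2 * d < c ∧ c < d)) ∧
    J.charpoly =
      (X - C ((-d : ℂ) + c)) * (X - C ((-d : ℂ) + c * ω)) *
        (X - C ((-d : ℂ) + c * ω ^ 2)) ∧
    ((-d : ℂ) + c).re = -d + c ∧
    ((-d : ℂ) + c * ω).re = -d - c / 2 ∧
    ((-d : ℂ) + c * ω ^ 2).re = -d - c / 2 := by
  -- ω as exp of a real multiple of I
  have hωθ : ω = Complex.exp (((2 * Real.pi / 3 : ℝ) : ℂ) * Complex.I) := by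
    rw [hω]; push_cast; ring_nf
  have hre : ω.re = -(1/2 : ℝ) := by
    rw [hωθ, Complex.exp_ofReal_mul_I_re]
    have : (2 * Real.pi / 3 : ℝ) = Real.pi - Real.pi / 3 := by ring
    rw [this, Real.cos_pi_sub, Real.cos_pi_div_three]
  have him : ω.im = Real.sqrt 3 / 2 := by
    rw [hωθ, Complex.exp_ofReal_mul_I_im]
    have : (2 * Real.pi / 3 : ℝ) = Real.pi - Real.pi / 3 := by ring
    rw [this, Real.sin_pi_sub, Real.sin_pi_div_three]
  have h3 : (Real.sqrt 3) ^ 2 = 3 := Real.sq_sqrt (by norm_num)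
  have hre2 : (ω ^ 2).re = -(1/2 : ℝ) := by
    rw [sq, Complex.mul_re, hre, him]
    nlinarith [h3]
  -- ω^3 = 1
  have hw3 : ω ^ 3 = 1 := by
    rw [hω, ← Complex.exp_nat_mul]
    rw [show ((3 : ℕ) : ℂ) * (2 * (Real.pi : ℂ) * Complex.I / 3) = 2 * Real.pi * Complex.I by
      push_cast; ring]
    exact Complex.exp_two_pi_mul_I
  -- 1 + ω + ω² = 0
  have hωne : ω ≠ 1 := by
    intro h
    rw [h] at hre
    simp at hre
    norm_num at hre
  have hws : 1 + ω + ω ^ 2 = 0 := by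
    have h0 : (ω - 1) * (1 + ω + ω ^ 2) = ω ^ 3 - 1 := by ring
    rw [hw3, sub_self] at h0
    rcases mul_eq_zero.mp h0 with h | h
    · exact absurd (sub_eq_zero.mp h) hωne
    · exact h
  -- matrix entries
  have e01 : J 0 1 = (c : ℂ) := by simpa using hJb 0
  have e02 : J 0 2 = 0 := by simpa using hJc 0
  have e12 : J 1 2 = (c : ℂ) := by simpa using hJb 1
  have e10 : J 1 0 = 0 := by simpa using hJc 1
  have e20 : J 2 0 = (c : ℂ) := by simpa using hJb 2
  have e21 : J 2 1 = 0 := by simpa using hJc 2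
  -- charpoly
  have hcp : J.charpoly = (X + C (d : ℂ)) ^ 3 - C (c : ℂ) ^ 3 := by
    rw [Matrix.charpoly, Matrix.det_fin_three]
    simp only [Matrix.charmatrix_apply, Matrix.diagonal_apply_eq,
      Matrix.diagonal_apply_ne _ (by decide : (0 : Fin 3) ≠ 1),
      Matrix.diagonal_apply_ne _ (by decide : (0 : Fin 3) ≠ 2),
      Matrix.diagonal_apply_ne _ (by decide : (1 : Fin 3) ≠ 0),
      Matrix.diagonal_apply_ne _ (by decide : (1 : Fin 3) ≠ 2),
      Matrix.diagonal_apply_ne _ (by decide : (2 : Fin 3) ≠ 0),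
      Matrix.diagonal_apply_ne _ (by decide : (2 : Fin 3) ≠ 1),
      hJa, e01, e02, e12, e10, e20, e21, map_neg, map_zero]
    ring
  have hCw3 : (C ω) ^ 3 = (1 : ℂ[X]) := by rw [← map_pow, hw3, map_one]
  have hCws : (1 : ℂ[X]) + C ω + (C ω) ^ 2 = 0 := by
    rw [← map_pow, ← map_one (C : ℂ →+* ℂ[X]), ← map_add, ← map_add, hws, map_zero]
  have hfac : J.charpoly =
      (X - C ((-d : ℂ) + c)) * (X - C ((-d : ℂ) + c * ω)) *
        (X - C ((-d : ℂ) + c * ω ^ 2)) := by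
    rw [hcp]
    simp only [map_add, map_mul, map_neg, map_pow]
    linear_combination (C (c : ℂ) ^ 3 - C (c : ℂ) ^ 2 * (X + C (d : ℂ))) * hCw3 +
      (C (c : ℂ) * (X + C (d : ℂ)) ^ 2 - C (c : ℂ) ^ 2 * (X + C (d : ℂ))) * hCws
  -- real parts
  have r1 : ((-d : ℂ) + c).re = -d + c := by simp
  have r2 : ((-d : ℂ) + c * ω).re = -d - c / 2 := by
    simp [Complex.add_re, Complex.mul_re, hre, him]
    ring
  have r3 : ((-d : ℂ) + c * ω ^ 2).re = -d - c / 2 := by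
    simp [Complex.add_re, Complex.mul_re, hre2]
    ring
  refine ⟨?_, hfac, r1, r2, r3⟩
  -- roots characterization
  have hroot : ∀ z : ℂ, J.charpoly.IsRoot z ↔
      z = (-d : ℂ) + c ∨ z = (-d : ℂ) + c * ω ∨ z = (-d : ℂ) + c * ω ^ 2 := by
    intro z
    rw [hfac]
    simp only [IsRoot, eval_mul, eval_sub, eval_X, eval_C, mul_eq_zero, sub_eq_zero]
    tauto
  constructor
  · intro h
    have h1 := h _ ((hroot _).mpr (Or.inl rfl))
    have h2 := h _ ((hroot _).mpr (Or.inr (Or.inl rfl)))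
    rw [r1] at h1
    rw [r2] at h2
    constructor <;> linarith
  · rintro ⟨hl, hr⟩ z hz
    rcases (hroot z).mp hz with h | h | h <;> rw [h]
    · rw [r1]; linarith
    · rw [r2]; linarith
    · rw [r3]; linarith
end
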